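/- Let n > 1 and 2 ≤ α ≤ n be integers. For every α-balanced sequence x ∈ Z_2^n and every (α−1)-balanced sequence y ∈ Z_2^n, one has |L_1(x)| > |L_1(y)| if and only if n > 2(α−1)α. -/

import Mathlib

open scoped Classical

/-- Length of a longest common subsequence of two lists. -/
noncomputable def lcsLen {α : Type*} (x y : List α) : ℕ :=
  sSup {k | ∃ z : List α, z.Sublist x ∧ z.Sublist y ∧ z.length = k}

/-- The fixed-length Levenshtein (FLL) distance on `Fin n → Fin q`:
`d_ℓ(x,y) = n - LCS(x,y)`. -/
noncomputable def fllDist {q n : ℕ} (x y : Fin n → Fin q) : ℕ :=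
  n - lcsLen (List.ofFn x) (List.ofFn y)

/-- The FLL `t`-ball centered at `x`. -/
noncomputable def fllBall (q n t : ℕ) (x : Fin n → Fin q) : Finset (Fin n → Fin q) :=
  Finset.univ.filter fun y => fllDist x y ≤ t

/-- The Hamming `t`-ball centered at `x`. -/
noncomputable def hammingBall (q n t : ℕ) (x : Fin n → Fin q) : Finset (Fin n → Fin q) :=
  Finset.univ.filter fun y => hammingDist x y ≤ t

/-- The number of runs (maximal blocks of consecutive equal symbols) of a list. -/
def numRuns {α : Type*} [DecidableEq α] : List α → ℕ
  | [] => 0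
  | [_] => 1
  | a :: b :: l => (if a = b then 0 else 1) + numRuns (b :: l)

/-- A list is alternating (of shape `σ σ' σ σ' ⋯` with `σ ≠ σ'`): adjacent entries
differ and entries two apart agree. -/
def IsAltList {α : Type*} (l : List α) : Prop :=
  (∀ i, ∀ h : i + 1 < l.length, l.get ⟨i, by omega⟩ ≠ l.get ⟨i + 1, h⟩) ∧
  (∀ i, ∀ h : i + 2 < l.length, l.get ⟨i, by omega⟩ = l.get ⟨i + 2, h⟩)

/-- The contiguous block `l_i ⋯ l_j` of a list (0-indexed, inclusive). -/
def blockSeg {α : Type*} (l : List α) (i j : ℕ) : List α := (l.drop i).take (j + 1 - i)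

/-- `(i, j)` indexes a maximal alternating segment of `l`. -/
def IsMaxAltSeg {α : Type*} (l : List α) (i j : ℕ) : Prop :=
  i ≤ j ∧ j < l.length ∧ IsAltList (blockSeg l i j) ∧
    (i = 0 ∨ ¬ IsAltList (blockSeg l (i - 1) j)) ∧
    (j = l.length - 1 ∨ ¬ IsAltList (blockSeg l i (j + 1)))

/-- The index pairs of the maximal alternating segments of `l`. -/
noncomputable def maxAltSegs {α : Type*} (l : List α) : Finset (ℕ × ℕ) :=
  (Finset.range l.length ×ˢ Finset.range l.length).filter fun p => IsMaxAltSeg l p.1 p.2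

/-- `A(x)`: the number of maximal alternating segments. -/
noncomputable def numAltSegs {α : Type*} (l : List α) : ℕ := (maxAltSegs l).card

/-- The sum `Σ s_i` of the lengths of the maximal alternating segments. -/
noncomputable def segLenSum {α : Type*} (l : List α) : ℕ :=
  ∑ p ∈ maxAltSegs l, (p.2 + 1 - p.1)

/-- The sum `Σ s_i²` of the squared lengths of the maximal alternating segments. -/
noncomputable def segLenSqSum {α : Type*} (l : List α) : ℕ :=
  ∑ p ∈ maxAltSegs l, (p.2 + 1 - p.1) ^ 2

/-- `x ∈ Z_2^n` is `a`-balanced: it has `a` maximal alternating segments, each of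
length `⌈n/a⌉` or `⌈n/a⌉ - 1`. -/
def IsBalanced (n a : ℕ) (x : Fin n → Fin 2) : Prop :=
  numAltSegs (List.ofFn x) = a ∧
    ∀ p ∈ maxAltSegs (List.ofFn x),
      p.2 + 1 - p.1 = (n + a - 1) / a ∨ p.2 + 1 - p.1 = (n + a - 1) / a - 1

/-- The number of zero entries of the difference vector
`x' = (x₂ - x₁, …, x_n - x_{n-1})` (differences mod `q`). -/
def zerosDiff {q n : ℕ} (x : Fin n → Fin q) : ℕ :=
  (List.zipWith (fun a b => a - b) (List.ofFn x).tail (List.ofFn x)).countP fun v => v.val == 0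

/-- Hamming weight of a binary word. -/
def wt {n : ℕ} (a : Fin n → Fin 2) : ℕ := (Finset.univ.filter fun i => a i ≠ 0).card

/-- An anticode of diameter one in `Z_2^n` under the FLL metric. -/
def IsAnticode1 (n : ℕ) (A : Finset (Fin n → Fin 2)) : Prop :=
  ∀ a ∈ A, ∀ b ∈ A, fllDist a b ≤ 1

/-- A maximal anticode of diameter one. -/
def IsMaximalAnticode1 (n : ℕ) (A : Finset (Fin n → Fin 2)) : Prop :=
  IsAnticode1 n A ∧ ∀ B : Finset (Fin n → Fin 2), IsAnticode1 n B → A ⊆ B → A = B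

/-- `χ(s)`: the total number, over all `x ∈ Z_q^n`, of maximal alternating
segments of `x` of length `s`. -/
noncomputable def chi (q n s : ℕ) : ℕ :=
  ∑ x : Fin n → Fin q, ((maxAltSegs (List.ofFn x)).filter fun p => p.2 + 1 - p.1 = s).card

/-!
For binary words, `y ≠ x` is at FLL distance one from `x` iff it arises from `x` by one of two
shift-flips with parameters `i ≤ j`: delete `x_i`, shift `x_{i+1} ⋯ x_j` left and put the flip of
`x_j` at `j`, or the mirror image of this. Moving the deleted (resp. inserted) position to the
nearest switch `x_m ≠ x_{m+1}` gives normal forms in which both parametrisations are injective: the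
first and last positions where `y` differs from `x` recover `(i, j)`. The two parameter sets have
`2n + |S| n` elements together, where `S` is the set of switches and `|S| = n - A(x)`, and a word
arises from both operations iff `i = j` or `[i, j]` lies in one maximal alternating segment. Hence
`2 |L_1(x)| = 2 + 3n + 2n² - 2 A(x) n - Σ s_i²`.

For an `a`-balanced word all `s_i` lie in `{t, t + 1}` with `a t < n ≤ a (t + 1)`, so
`Σ s_i² = (2t + 1) n - a t (t + 1)`. As a function of `t` this is concave with its maximum at the
balanced value, and comparing the values for `a` and `a - 1` parts at shifted arguments yields the
threshold `n > 2 a (a - 1)`.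
-/

namespace FLL

open Finset

section LCS

variable {α : Type*}

lemma bddAbove_commonSublistLengths (x y : List α) :
    BddAbove {k | ∃ z : List α, z.Sublist x ∧ z.Sublist y ∧ z.length = k} := by
  refine ⟨x.length, ?_⟩
  rintro - ⟨z, hzx, -, rfl⟩
  exact hzx.length_le

lemma length_le_lcsLen {x y z : List α} (hzx : z.Sublist x) (hzy : z.Sublist y) :
    z.length ≤ lcsLen x y :=
  le_csSup (bddAbove_commonSublistLengths x y) ⟨z, hzx, hzy, rfl⟩

lemma exists_lcs (x y : List α) :
    ∃ z : List α, z.Sublist x ∧ z.Sublist y ∧ z.length = lcsLen x y :=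
  Nat.sSup_mem (s := {k | ∃ z : List α, z.Sublist x ∧ z.Sublist y ∧ z.length = k})
    ⟨0, [], List.nil_sublist x, List.nil_sublist y, rfl⟩ (bddAbove_commonSublistLengths x y)

lemma exists_eq_eraseIdx_of_sublist {z l : List α} (h : z.Sublist l)
    (hl : z.length + 1 = l.length) : ∃ i < l.length, z = l.eraseIdx i := by
  induction h with
  | slnil => simp at hl
  | @cons z' l' a h ih =>
    exact ⟨0, by simp, by simpa using h.eq_of_length (by simpa using hl)⟩
  | @cons_cons z' l' a h ih =>
    obtain ⟨i, hi, hz⟩ := ih (by simpa using hl)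
    exact ⟨i + 1, by simpa using hi, by simp [hz]⟩

end LCS

theorem mem_fllBall_one_iff {q n : ℕ} {x y : Fin n → Fin q} :
    y ∈ fllBall q n 1 x ↔ y = x ∨
      ∃ i j, i < n ∧ j < n ∧ (List.ofFn x).eraseIdx i = (List.ofFn y).eraseIdx j := by
  rw [fllBall, mem_filter, fllDist]
  simp only [mem_univ, true_and]
  constructor
  · intro h
    obtain ⟨z, hzx, hzy, hzl⟩ := exists_lcs (List.ofFn x) (List.ofFn y)
    have hzn : z.length ≤ n := by simpa using hzx.length_le
    rcases Nat.lt_or_ge z.length n with hlt | hge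
    · obtain ⟨i, hi, rfl⟩ := exists_eq_eraseIdx_of_sublist hzx (by simp; omega)
      obtain ⟨j, hj, hij⟩ := exists_eq_eraseIdx_of_sublist hzy (by simp; omega)
      exact Or.inr ⟨i, j, by simpa using hi, by simpa using hj, hij⟩
    · have hx : z = List.ofFn x := hzx.eq_of_length (by simp; omega)
      have hy : z = List.ofFn y := hzy.eq_of_length (by simp; omega)
      exact Or.inl (List.ofFn_injective (hy.symm.trans hx))
  · rintro (rfl | ⟨i, j, hi, _, he⟩)
    · have := length_le_lcsLen (List.Sublist.refl (List.ofFn y)) (List.Sublist.refl _)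
      simp at this; omega
    · have := length_le_lcsLen (List.eraseIdx_sublist _ i) (he ▸ List.eraseIdx_sublist _ j)
      simp [List.length_eraseIdx, hi] at this; omega

section Words

lemma fin_two_eq_add_one_of_ne {a b : Fin 2} (h : a ≠ b) : a = b + 1 := by
  revert a b; decide

lemma fin_two_add_one_ne (a : Fin 2) : a + 1 ≠ a := by
  revert a; decide

lemma fin_two_add_one_add_one (a : Fin 2) : a + 1 + 1 = a := by
  revert a; decide

lemma fin_two_eq_of_ne_of_ne {a b c : Fin 2} (hab : a ≠ b) (hcb : c ≠ b) : a = c := by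
  revert a b c; decide

variable {n : ℕ}

-- Indexing by `ℕ` keeps all index arithmetic below in `ℕ`; the value past the end is junk.
def entry (x : Fin n → Fin 2) (k : ℕ) : Fin 2 := if h : k < n then x ⟨k, h⟩ else 0

lemma entry_of_lt (x : Fin n → Fin 2) {k : ℕ} (h : k < n) : entry x k = x ⟨k, h⟩ := dif_pos h

lemma getElem_ofFn_eq_entry (x : Fin n → Fin 2) {k : ℕ} (h : k < (List.ofFn x).length) :
    (List.ofFn x)[k] = entry x k := by
  rw [List.getElem_ofFn, entry_of_lt x (by simpa using h)]

lemma ext_entry {x y : Fin n → Fin 2} (h : ∀ k < n, entry y k = entry x k) : y = x := by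
  funext k
  simpa [entry_of_lt _ k.2] using h k k.2

lemma eraseIdx_ofFn (x : Fin n → Fin 2) {i : ℕ} (hi : i < n) :
    (List.ofFn x).eraseIdx i =
      List.ofFn (fun k : Fin (n - 1) => if (k : ℕ) < i then entry x k else entry x (k + 1)) := by
  apply List.ext_getElem (by simp [List.length_eraseIdx, hi])
  intro k h1 h2
  rw [List.getElem_ofFn]
  dsimp only
  rcases Nat.lt_or_ge k i with hki | hik
  · rw [List.getElem_eraseIdx_of_lt h1 hki, getElem_ofFn_eq_entry, if_pos hki]
  · rw [List.getElem_eraseIdx_of_ge h1 hik, getElem_ofFn_eq_entry, if_neg (by omega)]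

lemma eraseIdx_ofFn_eq_iff (x y : Fin n → Fin 2) {i j : ℕ} (hij : i ≤ j) (hj : j < n) :
    (List.ofFn x).eraseIdx i = (List.ofFn y).eraseIdx j ↔
      (∀ k < i, entry y k = entry x k) ∧
      (∀ k, i ≤ k → k < j → entry y k = entry x (k + 1)) ∧
      (∀ k, j < k → k < n → entry y k = entry x k) := by
  rw [eraseIdx_ofFn x (by omega), eraseIdx_ofFn y hj, List.ofFn_inj, funext_iff]
  constructor
  · intro h
    refine ⟨fun k hk => ?_, fun k hik hkj => ?_, fun k hjk hkn => ?_⟩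
    · simpa [hk, show k < j by omega] using (h ⟨k, by omega⟩).symm
    · simpa [show ¬k < i by omega, hkj] using (h ⟨k, by omega⟩).symm
    · have := (h ⟨k - 1, by omega⟩).symm
      simp only [show ¬k - 1 < i by omega, show ¬k - 1 < j by omega, if_false,
        Nat.sub_add_cancel (show 1 ≤ k by omega)] at this
      exact this
  · rintro ⟨hlt, hmid, hgt⟩ ⟨k, hk⟩
    simp only
    by_cases hki : k < i
    · rw [if_pos hki, if_pos (by omega), hlt k hki]
    by_cases hkj : k < j
    · rw [if_neg hki, if_pos hkj, hmid k (by omega) hkj]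
    · rw [if_neg hki, if_neg hkj, hgt (k + 1) (by omega) (by omega)]

def shiftLeftFlip (x : Fin n → Fin 2) (i j : ℕ) : Fin n → Fin 2 := fun k =>
  if i ≤ (k : ℕ) ∧ (k : ℕ) < j then entry x (k + 1)
  else if (k : ℕ) = j then entry x k + 1 else entry x k

def shiftRightFlip (x : Fin n → Fin 2) (i j : ℕ) : Fin n → Fin 2 := fun k =>
  if i < (k : ℕ) ∧ (k : ℕ) ≤ j then entry x (k - 1)
  else if (k : ℕ) = i then entry x k + 1 else entry x k

section ShiftFlip

variable (x : Fin n → Fin 2) {i j k : ℕ}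

lemma entry_shiftLeftFlip_of_mem (hk : k < n) (h : i ≤ k ∧ k < j) :
    entry (shiftLeftFlip x i j) k = entry x (k + 1) := by
  rw [entry_of_lt _ hk]
  simp only [shiftLeftFlip]
  rw [if_pos h]

lemma entry_shiftLeftFlip_self (hj : j < n) :
    entry (shiftLeftFlip x i j) j = entry x j + 1 := by
  rw [entry_of_lt _ hj]
  simp only [shiftLeftFlip]
  rw [if_neg (by omega), if_true]

lemma entry_shiftLeftFlip_of_not_mem (hk : k < n) (h : ¬(i ≤ k ∧ k < j)) (hkj : k ≠ j) :
    entry (shiftLeftFlip x i j) k = entry x k := by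
  rw [entry_of_lt _ hk]
  simp only [shiftLeftFlip]
  rw [if_neg h, if_neg hkj]

lemma entry_shiftRightFlip_of_mem (hk : k < n) (h : i < k ∧ k ≤ j) :
    entry (shiftRightFlip x i j) k = entry x (k - 1) := by
  rw [entry_of_lt _ hk]
  simp only [shiftRightFlip]
  rw [if_pos h]

lemma entry_shiftRightFlip_self (hi : i < n) :
    entry (shiftRightFlip x i j) i = entry x i + 1 := by
  rw [entry_of_lt _ hi]
  simp only [shiftRightFlip]
  rw [if_neg (by omega), if_true]

lemma entry_shiftRightFlip_of_not_mem (hk : k < n) (h : ¬(i < k ∧ k ≤ j)) (hki : k ≠ i) :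
    entry (shiftRightFlip x i j) k = entry x k := by
  rw [entry_of_lt _ hk]
  simp only [shiftRightFlip]
  rw [if_neg h, if_neg hki]

lemma eraseIdx_ofFn_shiftLeftFlip (hij : i ≤ j) (hj : j < n) :
    (List.ofFn x).eraseIdx i = (List.ofFn (shiftLeftFlip x i j)).eraseIdx j := by
  refine (eraseIdx_ofFn_eq_iff x _ hij hj).mpr
    ⟨fun k hk => ?_, fun k hik hkj => ?_, fun k hjk hk => ?_⟩
  · exact entry_shiftLeftFlip_of_not_mem x (by omega) (by omega) (by omega)
  · exact entry_shiftLeftFlip_of_mem x (by omega) ⟨hik, hkj⟩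
  · exact entry_shiftLeftFlip_of_not_mem x hk (by omega) (by omega)

lemma eraseIdx_ofFn_shiftRightFlip (hij : i ≤ j) (hj : j < n) :
    (List.ofFn (shiftRightFlip x i j)).eraseIdx i = (List.ofFn x).eraseIdx j := by
  refine (eraseIdx_ofFn_eq_iff _ x hij hj).mpr
    ⟨fun k hk => ?_, fun k hik hkj => ?_, fun k hjk hk => ?_⟩
  · exact (entry_shiftRightFlip_of_not_mem x (by omega) (by omega) (by omega)).symm
  · rw [entry_shiftRightFlip_of_mem x (by omega) ⟨by omega, by omega⟩, Nat.add_sub_cancel]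
  · exact (entry_shiftRightFlip_of_not_mem x hk (by omega) (by omega)).symm

end ShiftFlip

def diffSet (x y : Fin n → Fin 2) : Finset ℕ :=
  (Finset.range n).filter fun k => entry y k ≠ entry x k

lemma mem_diffSet {x y : Fin n → Fin 2} {k : ℕ} :
    k ∈ diffSet x y ↔ k < n ∧ entry y k ≠ entry x k := by
  simp [diffSet]

lemma diffSet_nonempty {x y : Fin n → Fin 2} (h : y ≠ x) : (diffSet x y).Nonempty := by
  by_contra hD
  exact h (ext_entry fun k hk => by_contra fun hne =>
    hD ⟨k, mem_diffSet.mpr ⟨hk, hne⟩⟩)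

lemma exists_shiftLeftFlip_of_eraseIdx_eq {x y : Fin n → Fin 2} {i j : ℕ} (hij : i ≤ j)
    (hj : j < n) (he : (List.ofFn x).eraseIdx i = (List.ofFn y).eraseIdx j) (hne : y ≠ x) :
    ∃ j', i ≤ j' ∧ j' < n ∧ y = shiftLeftFlip x i j' := by
  obtain ⟨hlt, hmid, hgt⟩ := (eraseIdx_ofFn_eq_iff x y hij hj).mp he
  set D := diffSet x y
  have hD := diffSet_nonempty hne
  obtain ⟨hj'n, hj'⟩ := mem_diffSet.mp (D.max'_mem hD)
  have hij' : i ≤ D.max' hD := by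
    by_contra h
    exact hj' (hlt _ (by omega))
  have hj'j : D.max' hD ≤ j := by
    by_contra h
    exact hj' (hgt _ (by omega) hj'n)
  refine ⟨D.max' hD, hij', hj'n, ext_entry fun k hk => ?_⟩
  by_cases hmem : i ≤ k ∧ k < D.max' hD
  · rw [entry_shiftLeftFlip_of_mem x hk hmem, hmid k hmem.1 (by omega)]
  by_cases hkj : k = D.max' hD
  · subst hkj
    rw [entry_shiftLeftFlip_self x hk]
    exact fin_two_eq_add_one_of_ne hj'
  rw [entry_shiftLeftFlip_of_not_mem x hk hmem hkj]
  rcases Nat.lt_or_ge k i with hki | hik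
  · exact hlt k hki
  · by_contra hne'
    exact absurd (D.le_max' k (mem_diffSet.mpr ⟨hk, hne'⟩)) (by omega)

lemma exists_shiftRightFlip_of_eraseIdx_eq {x y : Fin n → Fin 2} {i j : ℕ} (hij : i ≤ j)
    (hj : j < n) (he : (List.ofFn y).eraseIdx i = (List.ofFn x).eraseIdx j) (hne : y ≠ x) :
    ∃ i', i' ≤ j ∧ y = shiftRightFlip x i' j := by
  obtain ⟨hlt, hmid, hgt⟩ := (eraseIdx_ofFn_eq_iff y x hij hj).mp he
  set D := diffSet x y
  have hD := diffSet_nonempty hne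
  obtain ⟨hi'n, hi'⟩ := mem_diffSet.mp (D.min'_mem hD)
  have hii' : i ≤ D.min' hD := by
    by_contra h
    exact hi' (hlt _ (by omega)).symm
  have hi'j : D.min' hD ≤ j := by
    by_contra h
    exact hi' (hgt _ (by omega) hi'n).symm
  refine ⟨D.min' hD, hi'j, ext_entry fun k hk => ?_⟩
  by_cases hmem : D.min' hD < k ∧ k ≤ j
  · rw [entry_shiftRightFlip_of_mem x hk hmem, hmid (k - 1) (by omega) (by omega),
      Nat.sub_add_cancel (by omega)]
  by_cases hki : k = D.min' hD
  · subst hki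
    rw [entry_shiftRightFlip_self x hk]
    exact fin_two_eq_add_one_of_ne hi'
  rw [entry_shiftRightFlip_of_not_mem x hk hmem hki]
  rcases Nat.lt_or_ge j k with hjk | hkj
  · exact (hgt k hjk hk).symm
  · by_contra hne'
    exact absurd (D.min'_le k (mem_diffSet.mpr ⟨hk, hne'⟩)) (by omega)

theorem mem_fllBall_one_iff_shiftFlip {x y : Fin n → Fin 2} :
    y ∈ fllBall 2 n 1 x ↔ y = x ∨
      (∃ i j, i ≤ j ∧ j < n ∧ y = shiftLeftFlip x i j) ∨
      (∃ i j, i ≤ j ∧ j < n ∧ y = shiftRightFlip x i j) := by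
  rw [mem_fllBall_one_iff]
  constructor
  · rintro (rfl | ⟨i, j, hi, hj, he⟩)
    · exact Or.inl rfl
    by_cases hne : y = x
    · exact Or.inl hne
    rcases le_total i j with hij | hji
    · obtain ⟨j', hij', hj', rfl⟩ := exists_shiftLeftFlip_of_eraseIdx_eq hij hj he hne
      exact Or.inr (Or.inl ⟨i, j', hij', hj', rfl⟩)
    · obtain ⟨i', hi'i, rfl⟩ := exists_shiftRightFlip_of_eraseIdx_eq hji hi he.symm hne
      exact Or.inr (Or.inr ⟨i', i, hi'i, hi, rfl⟩)
  · rintro (rfl | ⟨i, j, hij, hj, rfl⟩ | ⟨i, j, hij, hj, rfl⟩)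
    · exact Or.inl rfl
    · exact Or.inr ⟨i, j, by omega, hj, eraseIdx_ofFn_shiftLeftFlip x hij hj⟩
    · exact Or.inr ⟨j, i, hj, by omega, (eraseIdx_ofFn_shiftRightFlip x hij hj).symm⟩

end Words

section Parameters

variable {n : ℕ}

def switchSet (x : Fin n → Fin 2) : Finset ℕ :=
  (range (n - 1)).filter fun k => entry x k ≠ entry x (k + 1)

lemma mem_switchSet {x : Fin n → Fin 2} {k : ℕ} :
    k ∈ switchSet x ↔ k < n - 1 ∧ entry x k ≠ entry x (k + 1) := by
  simp [switchSet]

def leftParams (x : Fin n → Fin 2) : Finset (ℕ × ℕ) :=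
  (range n).diag ∪ (switchSet x ×ˢ range n).filter fun p => p.1 < p.2

def rightParams (x : Fin n → Fin 2) : Finset (ℕ × ℕ) :=
  (range n).diag ∪ ((switchSet x ×ˢ range n).filter fun p => p.2 ≤ p.1).image
    fun p => (p.2, p.1 + 1)

lemma mem_leftParams {x : Fin n → Fin 2} {i j : ℕ} :
    (i, j) ∈ leftParams x ↔ j < n ∧ (i = j ∨ i < j ∧ i ∈ switchSet x) := by
  simp only [leftParams, mem_union, mem_diag, mem_filter, mem_product, mem_range]
  constructor
  · rintro (⟨hi, rfl⟩ | ⟨⟨hS, hj⟩, hij⟩)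
    · exact ⟨hi, Or.inl rfl⟩
    · exact ⟨hj, Or.inr ⟨hij, hS⟩⟩
  · rintro ⟨hj, rfl | ⟨hij, hS⟩⟩
    · exact Or.inl ⟨hj, rfl⟩
    · exact Or.inr ⟨⟨hS, hj⟩, hij⟩

lemma mem_rightParams {x : Fin n → Fin 2} {i j : ℕ} :
    (i, j) ∈ rightParams x ↔ j < n ∧ (i = j ∨ i < j ∧ j - 1 ∈ switchSet x) := by
  simp only [rightParams, mem_union, mem_diag, mem_image, mem_filter, mem_product, mem_range,
    Prod.exists, Prod.mk.injEq]
  constructor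
  · rintro (⟨hi, rfl⟩ | ⟨k, m, ⟨⟨hS, hm⟩, hmk⟩, rfl, rfl⟩)
    · exact ⟨hi, Or.inl rfl⟩
    · have := (mem_switchSet.mp hS).1
      exact ⟨by omega, Or.inr ⟨by omega, by simpa using hS⟩⟩
  · rintro ⟨hj, rfl | ⟨hij, hS⟩⟩
    · exact Or.inl ⟨hj, rfl⟩
    · exact Or.inr ⟨j - 1, i, ⟨⟨hS, by omega⟩, by omega⟩, rfl, by omega⟩

lemma card_leftParams_add_card_rightParams (x : Fin n → Fin 2) :
    #(leftParams x) + #(rightParams x) = 2 * n + #(switchSet x) * n := by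
  have hdisj : ∀ s : Finset (ℕ × ℕ), (∀ p ∈ s, p.1 ≠ p.2) → Disjoint (range n).diag s :=
    fun s hs => disjoint_left.mpr fun p hp hps => hs p hps (mem_diag.mp hp).2
  rw [leftParams, rightParams, card_union_of_disjoint, card_union_of_disjoint, diag_card,
    card_range, card_image_of_injective _ (fun p q h => by simp_all [Prod.ext_iff])]
  · have := card_filter_add_card_filter_not (s := switchSet x ×ˢ range n) (fun p => p.1 < p.2)
    simp only [not_lt, card_product, card_range] at this
    linarith
  · refine hdisj _ fun p hp => ?_
    obtain ⟨q, hq, rfl⟩ := mem_image.mp hp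
    have := (mem_filter.mp hq).2
    simp only
    omega
  · exact hdisj _ fun p hp => (mem_filter.mp hp).2.ne

end Parameters

section NormalForms

variable {n : ℕ} (x : Fin n → Fin 2) {i j : ℕ}

lemma entry_eq_entry_succ_of_not_mem_switchSet {k : ℕ} (hk : k + 1 < n)
    (h : k ∉ switchSet x) : entry x k = entry x (k + 1) := by
  by_contra hne
  exact h (mem_switchSet.mpr ⟨by omega, hne⟩)

lemma shiftLeftFlip_eq_of_forall_not_mem {i' : ℕ} (hii' : i ≤ i') (hi'j : i' ≤ j) (hj : j < n)
    (h : ∀ m, i ≤ m → m < i' → m ∉ switchSet x) :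
    shiftLeftFlip x i j = shiftLeftFlip x i' j := by
  refine ext_entry fun k hk => ?_
  by_cases hki : i ≤ k ∧ k < i'
  · rw [entry_shiftLeftFlip_of_mem x hk ⟨hki.1, by omega⟩,
      entry_shiftLeftFlip_of_not_mem x hk (by omega) (by omega)]
    exact (entry_eq_entry_succ_of_not_mem_switchSet x (by omega) (h k hki.1 hki.2)).symm
  by_cases hkj : i' ≤ k ∧ k < j
  · rw [entry_shiftLeftFlip_of_mem x hk hkj, entry_shiftLeftFlip_of_mem x hk ⟨by omega, hkj.2⟩]
  by_cases hk' : k = j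
  · subst hk'
    rw [entry_shiftLeftFlip_self x hk, entry_shiftLeftFlip_self x hk]
  rw [entry_shiftLeftFlip_of_not_mem x hk hkj hk',
    entry_shiftLeftFlip_of_not_mem x hk (by omega) hk']

lemma shiftRightFlip_eq_of_forall_not_mem {j' : ℕ} (hij' : i ≤ j') (hj'j : j' ≤ j)
    (h : ∀ m, j' ≤ m → m < j → m ∉ switchSet x) :
    shiftRightFlip x i j = shiftRightFlip x i j' := by
  refine ext_entry fun k hk => ?_
  by_cases hkj : j' < k ∧ k ≤ j
  · rw [entry_shiftRightFlip_of_mem x hk ⟨by omega, hkj.2⟩,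
      entry_shiftRightFlip_of_not_mem x hk (by omega) (by omega)]
    have := entry_eq_entry_succ_of_not_mem_switchSet x (k := k - 1) (by omega)
      (h (k - 1) (by omega) (by omega))
    rwa [Nat.sub_add_cancel (by omega)] at this
  by_cases hki : i < k ∧ k ≤ j'
  · rw [entry_shiftRightFlip_of_mem x hk hki, entry_shiftRightFlip_of_mem x hk ⟨hki.1, by omega⟩]
  by_cases hk' : k = i
  · subst hk'
    rw [entry_shiftRightFlip_self x hk, entry_shiftRightFlip_self x hk]
  rw [entry_shiftRightFlip_of_not_mem x hk hki hk',
    entry_shiftRightFlip_of_not_mem x hk (by omega) hk']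

lemma exists_mem_leftParams (hij : i ≤ j) (hj : j < n) :
    ∃ i', (i', j) ∈ leftParams x ∧ shiftLeftFlip x i' j = shiftLeftFlip x i j := by
  set T := (Icc i j).filter fun m => m = j ∨ m ∈ switchSet x
  have hT : T.Nonempty := ⟨j, mem_filter.mpr ⟨mem_Icc.mpr ⟨hij, le_rfl⟩, Or.inl rfl⟩⟩
  obtain ⟨hi', hi'T⟩ := mem_filter.mp (T.min'_mem hT)
  rw [mem_Icc] at hi'
  refine ⟨T.min' hT, mem_leftParams.mpr ⟨hj, ?_⟩,
    (shiftLeftFlip_eq_of_forall_not_mem x hi'.1 hi'.2 hj fun m him hmi hm => ?_).symm⟩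
  · rcases hi'T with h | h
    · exact Or.inl h
    · exact (eq_or_lt_of_le hi'.2).imp id fun hlt => ⟨hlt, h⟩
  · have := T.min'_le m (mem_filter.mpr ⟨mem_Icc.mpr ⟨him, by omega⟩, Or.inr hm⟩)
    omega

lemma exists_mem_rightParams (hij : i ≤ j) (hj : j < n) :
    ∃ j', (i, j') ∈ rightParams x ∧ shiftRightFlip x i j' = shiftRightFlip x i j := by
  set T := (Icc i j).filter fun m => m = i ∨ m - 1 ∈ switchSet x
  have hT : T.Nonempty := ⟨i, mem_filter.mpr ⟨mem_Icc.mpr ⟨le_rfl, hij⟩, Or.inl rfl⟩⟩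
  obtain ⟨hj', hj'T⟩ := mem_filter.mp (T.max'_mem hT)
  rw [mem_Icc] at hj'
  refine ⟨T.max' hT, mem_rightParams.mpr ⟨by omega, ?_⟩,
    (shiftRightFlip_eq_of_forall_not_mem x hj'.1 hj'.2 fun m hjm hmj hm => ?_).symm⟩
  · rcases hj'T with h | h
    · exact Or.inl h.symm
    · exact (eq_or_lt_of_le hj'.1).imp id fun hlt => ⟨hlt, h⟩
  · have := T.le_max' (m + 1) (mem_filter.mpr ⟨mem_Icc.mpr ⟨by omega, by omega⟩, Or.inr (by simpa)⟩)
    omega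

lemma isGreatest_diffSet_shiftLeftFlip (hj : j < n) :
    IsGreatest (diffSet x (shiftLeftFlip x i j) : Set ℕ) j := by
  refine ⟨mem_diffSet.mpr ⟨hj, ?_⟩, fun k hk => ?_⟩
  · rw [entry_shiftLeftFlip_self x hj]
    exact fin_two_add_one_ne _
  · obtain ⟨hkn, hne⟩ := mem_diffSet.mp hk
    by_contra hjk
    exact hne (entry_shiftLeftFlip_of_not_mem x hkn (by omega) (by omega))

lemma isLeast_diffSet_shiftLeftFlip (h : (i, j) ∈ leftParams x) :
    IsLeast (diffSet x (shiftLeftFlip x i j) : Set ℕ) i := by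
  obtain ⟨hj, hij⟩ := mem_leftParams.mp h
  refine ⟨mem_diffSet.mpr ⟨by omega, ?_⟩, fun k hk => ?_⟩
  · rcases hij with rfl | ⟨hij, hS⟩
    · rw [entry_shiftLeftFlip_self x hj]
      exact fin_two_add_one_ne _
    · rw [entry_shiftLeftFlip_of_mem x (by omega) ⟨le_rfl, hij⟩]
      exact (mem_switchSet.mp hS).2.symm
  · obtain ⟨hkn, hne⟩ := mem_diffSet.mp hk
    by_contra hki
    exact hne (entry_shiftLeftFlip_of_not_mem x hkn (by omega) (by omega))

lemma isLeast_diffSet_shiftRightFlip (hij : i ≤ j) (hj : j < n) :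
    IsLeast (diffSet x (shiftRightFlip x i j) : Set ℕ) i := by
  refine ⟨mem_diffSet.mpr ⟨by omega, ?_⟩, fun k hk => ?_⟩
  · rw [entry_shiftRightFlip_self x (by omega)]
    exact fin_two_add_one_ne _
  · obtain ⟨hkn, hne⟩ := mem_diffSet.mp hk
    by_contra hki
    exact hne (entry_shiftRightFlip_of_not_mem x hkn (by omega) (by omega))

lemma isGreatest_diffSet_shiftRightFlip (h : (i, j) ∈ rightParams x) :
    IsGreatest (diffSet x (shiftRightFlip x i j) : Set ℕ) j := by
  obtain ⟨hj, hij⟩ := mem_rightParams.mp h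
  refine ⟨mem_diffSet.mpr ⟨hj, ?_⟩, fun k hk => ?_⟩
  · rcases hij with rfl | ⟨hij, hS⟩
    · rw [entry_shiftRightFlip_self x hj]
      exact fin_two_add_one_ne _
    · rw [entry_shiftRightFlip_of_mem x hj ⟨hij, le_rfl⟩]
      have := (mem_switchSet.mp hS).2
      rwa [Nat.sub_add_cancel (by omega)] at this
  · obtain ⟨hkn, hne⟩ := mem_diffSet.mp hk
    by_contra hjk
    exact hne (entry_shiftRightFlip_of_not_mem x hkn (by omega) (by omega))

lemma injOn_shiftLeftFlip :
    Set.InjOn (fun p : ℕ × ℕ => shiftLeftFlip x p.1 p.2) (leftParams x) := by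
  rintro ⟨i, j⟩ h ⟨i', j'⟩ h' he
  simp only at he
  refine Prod.ext ((isLeast_diffSet_shiftLeftFlip x h).unique ?_)
    ((isGreatest_diffSet_shiftLeftFlip x (i := i) (mem_leftParams.mp h).1).unique ?_)
  · rw [he]; exact isLeast_diffSet_shiftLeftFlip x h'
  · rw [he]; exact isGreatest_diffSet_shiftLeftFlip x (mem_leftParams.mp h').1

lemma injOn_shiftRightFlip :
    Set.InjOn (fun p : ℕ × ℕ => shiftRightFlip x p.1 p.2) (rightParams x) := by
  rintro ⟨i, j⟩ h ⟨i', j'⟩ h' he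
  have hj := mem_rightParams.mp h
  have hj' := mem_rightParams.mp h'
  simp only at he
  refine Prod.ext ((isLeast_diffSet_shiftRightFlip x (by omega) hj.1).unique ?_)
    ((isGreatest_diffSet_shiftRightFlip x h).unique ?_)
  · rw [he]; exact isLeast_diffSet_shiftRightFlip x (by omega) hj'.1
  · rw [he]; exact isGreatest_diffSet_shiftRightFlip x h'

end NormalForms

section Ball

variable {n : ℕ} (x : Fin n → Fin 2) {i j : ℕ}

def leftFlips (x : Fin n → Fin 2) : Finset (Fin n → Fin 2) :=
  (leftParams x).image fun p => shiftLeftFlip x p.1 p.2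

def rightFlips (x : Fin n → Fin 2) : Finset (Fin n → Fin 2) :=
  (rightParams x).image fun p => shiftRightFlip x p.1 p.2

theorem fllBall_eq_insert : fllBall 2 n 1 x = insert x (leftFlips x ∪ rightFlips x) := by
  ext y
  simp only [mem_fllBall_one_iff_shiftFlip, leftFlips, rightFlips, mem_insert, mem_union,
    mem_image, Prod.exists]
  refine or_congr_right (or_congr ⟨?_, ?_⟩ ⟨?_, ?_⟩)
  · rintro ⟨i, j, hij, hj, rfl⟩
    obtain ⟨i', h, he⟩ := exists_mem_leftParams x hij hj
    exact ⟨i', j, h, he⟩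
  · rintro ⟨i, j, h, rfl⟩
    obtain ⟨hj, hij⟩ := mem_leftParams.mp h
    exact ⟨i, j, by omega, hj, rfl⟩
  · rintro ⟨i, j, hij, hj, rfl⟩
    obtain ⟨j', h, he⟩ := exists_mem_rightParams x hij hj
    exact ⟨i, j', h, he⟩
  · rintro ⟨i, j, h, rfl⟩
    obtain ⟨hj, hij⟩ := mem_rightParams.mp h
    exact ⟨i, j, by omega, hj, rfl⟩

lemma self_notMem_leftFlips_union_rightFlips : x ∉ leftFlips x ∪ rightFlips x := by
  simp only [leftFlips, rightFlips, mem_union, mem_image, Prod.exists, not_or, not_exists,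
    not_and]
  refine ⟨fun i j h he => ?_, fun i j h he => ?_⟩
  · have hmem := (isGreatest_diffSet_shiftLeftFlip x (i := i) (mem_leftParams.mp h).1).1
    rw [he] at hmem
    exact (mem_diffSet.mp hmem).2 rfl
  · obtain ⟨hj, hij⟩ := mem_rightParams.mp h
    have hmem := (isLeast_diffSet_shiftRightFlip x (i := i) (by omega) hj).1
    rw [he] at hmem
    exact (mem_diffSet.mp hmem).2 rfl

lemma forall_mem_switchSet_of_shiftLeftFlip_eq (hj : j < n)
    (he : shiftLeftFlip x i j = shiftRightFlip x i j) :
    ∀ m, i ≤ m → m < j → m ∈ switchSet x := by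
  intro m him
  induction m, him using Nat.le_induction with
  | base =>
    intro hij
    have hi := congrArg (entry · i) he
    rw [entry_shiftLeftFlip_of_mem x (by omega) ⟨le_rfl, hij⟩,
      entry_shiftRightFlip_self x (j := j) (by omega)] at hi
    exact mem_switchSet.mpr ⟨by omega, fun h => fin_two_add_one_ne _ (h ▸ hi).symm⟩
  | succ m him ih =>
    intro hmj
    have hm := congrArg (entry · (m + 1)) he
    rw [entry_shiftLeftFlip_of_mem x (by omega) ⟨by omega, hmj⟩,
      entry_shiftRightFlip_of_mem x (by omega) ⟨by omega, by omega⟩, Nat.add_sub_cancel] at hm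
    refine mem_switchSet.mpr ⟨by omega, fun h => ?_⟩
    exact (mem_switchSet.mp (ih (by omega))).2 (h ▸ hm).symm

lemma shiftLeftFlip_eq_of_forall_mem_switchSet (hij : i ≤ j)
    (halt : ∀ m, i ≤ m → m < j → m ∈ switchSet x) :
    shiftLeftFlip x i j = shiftRightFlip x i j := by
  have hsw : ∀ m, i ≤ m → m < j → entry x (m + 1) = entry x m + 1 := fun m h1 h2 =>
    fin_two_eq_add_one_of_ne (mem_switchSet.mp (halt m h1 h2)).2.symm
  refine ext_entry fun k hk => ?_
  by_cases hki : k = i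
  · subst hki
    rw [entry_shiftRightFlip_self x hk]
    rcases eq_or_lt_of_le hij with rfl | hij
    · exact entry_shiftLeftFlip_self x hk
    · rw [entry_shiftLeftFlip_of_mem x hk ⟨le_rfl, hij⟩, hsw k le_rfl hij]
  by_cases hmem : i < k ∧ k ≤ j
  · rw [entry_shiftRightFlip_of_mem x hk hmem]
    have hprev := hsw (k - 1) (by omega) (by omega)
    rw [Nat.sub_add_cancel (by omega)] at hprev
    rcases eq_or_lt_of_le hmem.2 with rfl | hkj
    · rw [entry_shiftLeftFlip_self x hk, hprev, fin_two_add_one_add_one]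
    · rw [entry_shiftLeftFlip_of_mem x hk ⟨by omega, hkj⟩, hsw k (by omega) hkj, hprev,
        fin_two_add_one_add_one]
  · rw [entry_shiftRightFlip_of_not_mem x hk hmem hki,
      entry_shiftLeftFlip_of_not_mem x hk (by omega) (by omega)]

def altPairs (x : Fin n → Fin 2) : Finset (ℕ × ℕ) :=
  (range n ×ˢ range n).filter fun p => p.1 < p.2 ∧ ∀ m, p.1 ≤ m → m < p.2 → m ∈ switchSet x

lemma mem_altPairs :
    (i, j) ∈ altPairs x ↔ j < n ∧ i < j ∧ ∀ m, i ≤ m → m < j → m ∈ switchSet x := by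
  simp only [altPairs, mem_filter, mem_product, mem_range]
  constructor
  · rintro ⟨⟨-, hj⟩, h⟩
    exact ⟨hj, h⟩
  · rintro ⟨hj, hij, h⟩
    exact ⟨⟨by omega, hj⟩, hij, h⟩

lemma mem_diag_union_altPairs :
    (i, j) ∈ (range n).diag ∪ altPairs x ↔
      i ≤ j ∧ j < n ∧ ∀ m, i ≤ m → m < j → m ∈ switchSet x := by
  rw [mem_union, mem_altPairs, mem_diag, mem_range]
  constructor
  · rintro (⟨hi, hij⟩ | ⟨hj, hij, halt⟩)
    · obtain rfl : i = j := hij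
      exact ⟨le_rfl, hi, fun m h1 h2 => by omega⟩
    · exact ⟨hij.le, hj, halt⟩
  · rintro ⟨hij, hj, halt⟩
    rcases eq_or_lt_of_le hij with rfl | hlt
    · exact Or.inl ⟨hj, rfl⟩
    · exact Or.inr ⟨hj, hlt, halt⟩

lemma diag_union_altPairs_subset_leftParams : (range n).diag ∪ altPairs x ⊆ leftParams x := by
  rintro ⟨i, j⟩ h
  obtain ⟨hij, hj, halt⟩ := (mem_diag_union_altPairs x).mp h
  refine mem_leftParams.mpr ⟨hj, (eq_or_lt_of_le hij).imp id fun hlt => ⟨hlt, ?_⟩⟩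
  exact halt i le_rfl hlt

/-- A word produced by both shift-flips is produced by both with the same parameters, since
these are its first and last differences with `x`. -/
lemma leftFlips_inter_rightFlips :
    leftFlips x ∩ rightFlips x =
      ((range n).diag ∪ altPairs x).image fun p => shiftLeftFlip x p.1 p.2 := by
  ext y
  simp only [leftFlips, rightFlips, mem_inter, mem_image, Prod.exists]
  constructor
  · rintro ⟨⟨i, j, hL, rfl⟩, i', j', hR, he⟩
    obtain ⟨hj, -⟩ := mem_leftParams.mp hL
    obtain ⟨hj', hij'⟩ := mem_rightParams.mp hR
    obtain rfl : i' = i := (isLeast_diffSet_shiftRightFlip x (by omega) hj').unique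
      (he ▸ isLeast_diffSet_shiftLeftFlip x hL)
    obtain rfl : j' = j := (isGreatest_diffSet_shiftRightFlip x hR).unique
      (he ▸ isGreatest_diffSet_shiftLeftFlip x hj)
    refine ⟨i', j', (mem_diag_union_altPairs x).mpr ⟨by omega, hj, ?_⟩, rfl⟩
    exact forall_mem_switchSet_of_shiftLeftFlip_eq x hj he.symm
  · rintro ⟨i, j, h, rfl⟩
    obtain ⟨hij, hj, halt⟩ := (mem_diag_union_altPairs x).mp h
    refine ⟨⟨i, j, diag_union_altPairs_subset_leftParams x h, rfl⟩, i, j,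
      mem_rightParams.mpr ⟨hj, (eq_or_lt_of_le hij).imp id fun hlt => ⟨hlt, ?_⟩⟩,
      (shiftLeftFlip_eq_of_forall_mem_switchSet x hij halt).symm⟩
    exact halt (j - 1) (by omega) (by omega)

lemma card_leftFlips_inter_rightFlips : #(leftFlips x ∩ rightFlips x) = n + #(altPairs x) := by
  rw [leftFlips_inter_rightFlips, card_image_of_injOn ((injOn_shiftLeftFlip x).mono
      (by exact_mod_cast diag_union_altPairs_subset_leftParams x)),
    card_union_of_disjoint, diag_card, card_range]
  refine disjoint_left.mpr fun p hp hp' => ?_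
  have := ((mem_altPairs x).mp (by simpa using hp')).2.1
  have := (mem_diag.mp hp).2
  omega

theorem card_fllBall_add_card_altPairs :
    #(fllBall 2 n 1 x) + n + #(altPairs x) = 1 + 2 * n + #(switchSet x) * n := by
  have hunion := card_union_add_card_inter (leftFlips x) (rightFlips x)
  rw [leftFlips, rightFlips, card_image_of_injOn (injOn_shiftLeftFlip x),
    card_image_of_injOn (injOn_shiftRightFlip x), card_leftParams_add_card_rightParams,
    ← leftFlips, ← rightFlips, card_leftFlips_inter_rightFlips] at hunion
  rw [fllBall_eq_insert, card_insert_of_notMem (self_notMem_leftFlips_union_rightFlips x)]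
  omega

end Ball

section Segments

lemma isAltList_iff_of_fin_two {L : List (Fin 2)} :
    IsAltList L ↔ ∀ t (h : t + 1 < L.length), L[t] ≠ L[t + 1] := by
  refine ⟨fun h => h.1, fun h => ⟨h, fun t ht => ?_⟩⟩
  exact fin_two_eq_of_ne_of_ne (h t (by omega)) (h (t + 1) ht).symm

variable {n : ℕ} (x : Fin n → Fin 2) {i j : ℕ}

lemma isAltList_blockSeg_iff (hj : j < n) :
    IsAltList (blockSeg (List.ofFn x) i j) ↔ ∀ m, i ≤ m → m < j → m ∈ switchSet x := by
  have hlen : (blockSeg (List.ofFn x) i j).length = j + 1 - i := by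
    simp [blockSeg]; omega
  have hget : ∀ t (h : t < (blockSeg (List.ofFn x) i j).length),
      (blockSeg (List.ofFn x) i j)[t] = entry x (i + t) := fun t h => by
    simp only [blockSeg, List.getElem_take, List.getElem_drop, getElem_ofFn_eq_entry]
  rw [isAltList_iff_of_fin_two]
  constructor
  · intro h m him hmj
    have := h (m - i) (by omega)
    rw [hget, hget, show i + (m - i) = m by omega, show i + (m - i + 1) = m + 1 by omega] at this
    exact mem_switchSet.mpr ⟨by omega, this⟩
  · intro h t ht
    rw [hget, hget, ← add_assoc]
    exact (mem_switchSet.mp (h (i + t) (by omega) (by omega))).2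

lemma mem_maxAltSegs_iff :
    (i, j) ∈ maxAltSegs (List.ofFn x) ↔
      i ≤ j ∧ j < n ∧ (∀ m, i ≤ m → m < j → m ∈ switchSet x) ∧
        (i = 0 ∨ i - 1 ∉ switchSet x) ∧ (j = n - 1 ∨ j ∉ switchSet x) := by
  simp only [maxAltSegs, IsMaxAltSeg, mem_filter, mem_product, mem_range, List.length_ofFn]
  constructor
  · rintro ⟨-, hij, hj, halt, hleft, hright⟩
    rw [isAltList_blockSeg_iff x hj] at halt
    refine ⟨hij, hj, halt, hleft.imp_right fun h hS => h ?_, ?_⟩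
    · rcases Nat.lt_or_ge (j + 1) n with hj1 | hj1
      · refine hright.imp_right fun h hS => h ?_
        rw [isAltList_blockSeg_iff x hj1]
        intro m him hmj
        rcases Nat.lt_or_ge m j with hlt | hge
        · exact halt m him hlt
        · rwa [show m = j by omega]
      · exact Or.inl (by omega)
    · rw [isAltList_blockSeg_iff x hj]
      intro m hm hmj
      rcases eq_or_lt_of_le hm with rfl | hlt
      · exact hS
      · exact halt m (by omega) hmj
  · rintro ⟨hij, hj, halt, hleft, hright⟩
    refine ⟨⟨by omega, hj⟩, hij, hj, (isAltList_blockSeg_iff x hj).mpr halt, ?_, ?_⟩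
    · refine (Nat.eq_zero_or_pos i).imp id fun hi h => ?_
      rw [isAltList_blockSeg_iff x hj] at h
      exact hleft.elim (by omega) (· (h (i - 1) le_rfl (by omega)))
    · rcases Nat.lt_or_ge (j + 1) n with hj1 | hj1
      · refine hright.imp id fun hjS h => hjS ?_
        rw [isAltList_blockSeg_iff x hj1] at h
        exact h j hij (by omega)
      · exact Or.inl (by omega)

end Segments

section SegmentStructure

variable {n : ℕ} (x : Fin n → Fin 2)

lemma exists_mem_maxAltSegs {k : ℕ} (hk : k < n) :
    ∃ i j, (i, j) ∈ maxAltSegs (List.ofFn x) ∧ i ≤ k ∧ k ≤ j := by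
  have hj : ∃ j, k ≤ j ∧ (j = n - 1 ∨ j ∉ switchSet x) := ⟨n - 1, by omega, Or.inl rfl⟩
  obtain ⟨hkj, hjS⟩ := Nat.find_spec hj
  have hjn : Nat.find hj < n := by
    have := Nat.find_min' hj ⟨by omega, Or.inl rfl⟩
    omega
  have haltk : ∀ m, k ≤ m → m < Nat.find hj → m ∈ switchSet x :=
    fun m hkm hmj => by_contra fun hm => Nat.find_min hj hmj ⟨hkm, Or.inr hm⟩
  have hi : ∃ i, ∀ m, i ≤ m → m < Nat.find hj → m ∈ switchSet x := ⟨k, haltk⟩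
  have hik : Nat.find hi ≤ k := Nat.find_min' hi haltk
  refine ⟨Nat.find hi, Nat.find hj,
    (mem_maxAltSegs_iff x).mpr ⟨by omega, hjn, Nat.find_spec hi, ?_, hjS⟩, hik, hkj⟩
  refine (Nat.eq_zero_or_pos _).imp id fun hi0 hS => Nat.find_min hi (Nat.sub_one_lt_of_lt hi0) ?_
  intro m hm hmj
  rcases eq_or_lt_of_le hm with h | h
  · rwa [← h]
  · exact Nat.find_spec hi m (by omega) hmj

variable {x} {i j i' j' : ℕ}

lemma right_le_of_mem_maxAltSegs (h : (i, j) ∈ maxAltSegs (List.ofFn x))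
    (h' : (i', j') ∈ maxAltSegs (List.ofFn x)) (hij' : i ≤ j') : j ≤ j' := by
  obtain ⟨-, hj, halt, -, -⟩ := (mem_maxAltSegs_iff x).mp h
  obtain ⟨-, -, -, -, hright'⟩ := (mem_maxAltSegs_iff x).mp h'
  by_contra hlt
  exact hright'.elim (by omega) (· (halt j' hij' (by omega)))

lemma left_le_of_mem_maxAltSegs (h : (i, j) ∈ maxAltSegs (List.ofFn x))
    (h' : (i', j') ∈ maxAltSegs (List.ofFn x)) (hi'j : i' ≤ j) : i' ≤ i := by
  obtain ⟨-, -, halt, -, -⟩ := (mem_maxAltSegs_iff x).mp h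
  obtain ⟨-, -, -, hleft', -⟩ := (mem_maxAltSegs_iff x).mp h'
  by_contra hlt
  exact hleft'.elim (by omega) (· (halt (i' - 1) (by omega) (by omega)))

lemma eq_of_mem_maxAltSegs_of_mem_Icc {p q : ℕ × ℕ} {k : ℕ} (hp : p ∈ maxAltSegs (List.ofFn x))
    (hq : q ∈ maxAltSegs (List.ofFn x)) (hkp : k ∈ Icc p.1 p.2) (hkq : k ∈ Icc q.1 q.2) :
    p = q := by
  obtain ⟨i, j⟩ := p
  obtain ⟨i', j'⟩ := q
  rw [mem_Icc] at hkp hkq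
  have := right_le_of_mem_maxAltSegs hp hq (by omega)
  have := right_le_of_mem_maxAltSegs hq hp (by omega)
  have := left_le_of_mem_maxAltSegs hp hq (by omega)
  have := left_le_of_mem_maxAltSegs hq hp (by omega)
  ext <;> simp only <;> omega

lemma pairwiseDisjoint_Icc_maxAltSegs :
    (maxAltSegs (List.ofFn x) : Set (ℕ × ℕ)).PairwiseDisjoint fun p => Icc p.1 p.2 :=
  fun _ hp _ hq hpq => disjoint_left.mpr fun _ hk hk' =>
    hpq (eq_of_mem_maxAltSegs_of_mem_Icc hp hq hk hk')

lemma forall_mem_switchSet_iff (hij : i ≤ j) (hj : j < n) :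
    (∀ m, i ≤ m → m < j → m ∈ switchSet x) ↔
      ∃ p ∈ maxAltSegs (List.ofFn x), p.1 ≤ i ∧ j ≤ p.2 := by
  constructor
  · intro halt
    obtain ⟨a, b, hab, hai, hib⟩ := exists_mem_maxAltSegs x (show i < n by omega)
    obtain ⟨-, hb, -, -, hright⟩ := (mem_maxAltSegs_iff x).mp hab
    refine ⟨(a, b), hab, hai, ?_⟩
    by_contra hbj
    exact hright.elim (by omega) (· (halt b hib (by omega)))
  · rintro ⟨⟨a, b⟩, hab, hai, hjb⟩ m him hmj
    exact ((mem_maxAltSegs_iff x).mp hab).2.2.1 m (le_trans hai him) (lt_of_lt_of_le hmj hjb)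

end SegmentStructure

section Counting

variable {n : ℕ} (x : Fin n → Fin 2)

lemma range_eq_biUnion_Icc :
    range n = (maxAltSegs (List.ofFn x)).biUnion fun p => Icc p.1 p.2 := by
  ext k
  simp only [mem_range, mem_biUnion, mem_Icc, Prod.exists]
  constructor
  · intro hk
    obtain ⟨i, j, h, hik, hkj⟩ := exists_mem_maxAltSegs x hk
    exact ⟨i, j, h, hik, hkj⟩
  · rintro ⟨i, j, h, -, hkj⟩
    have := ((mem_maxAltSegs_iff x).mp h).2.1
    omega

lemma switchSet_eq_biUnion_Ico :
    switchSet x = (maxAltSegs (List.ofFn x)).biUnion fun p => Ico p.1 p.2 := by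
  ext k
  simp only [mem_biUnion, mem_Ico, Prod.exists]
  constructor
  · intro hk
    have hkn := (mem_switchSet.mp hk).1
    obtain ⟨⟨i, j⟩, h, hik, hkj⟩ :=
      (forall_mem_switchSet_iff (x := x) (Nat.le_succ k) (by omega)).mp fun m h1 h2 => by
        rwa [show m = k by omega]
    exact ⟨i, j, h, hik, hkj⟩
  · rintro ⟨i, j, h, hik, hkj⟩
    exact ((mem_maxAltSegs_iff x).mp h).2.2.1 k hik hkj

lemma altPairs_eq_biUnion :
    altPairs x = (maxAltSegs (List.ofFn x)).biUnion fun p =>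
      (Icc p.1 p.2 ×ˢ Icc p.1 p.2).filter fun q => q.1 < q.2 := by
  ext ⟨i, j⟩
  simp only [mem_altPairs, mem_biUnion, mem_filter, mem_product, mem_Icc, Prod.exists]
  constructor
  · rintro ⟨hj, hij, halt⟩
    obtain ⟨⟨a, b⟩, h, hai, hjb⟩ := (forall_mem_switchSet_iff hij.le hj).mp halt
    exact ⟨a, b, h, ⟨⟨hai, by simp only at hjb; omega⟩, by simp only at hai; omega, hjb⟩, hij⟩
  · rintro ⟨a, b, h, ⟨⟨hai, -⟩, -, hjb⟩, hij⟩
    have := ((mem_maxAltSegs_iff x).mp h).2.1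
    exact ⟨by omega, hij, (forall_mem_switchSet_iff hij.le (by omega)).mpr ⟨(a, b), h, hai, hjb⟩⟩

theorem segLenSum_ofFn : segLenSum (List.ofFn x) = n := by
  have := congrArg card (range_eq_biUnion_Icc x)
  rw [card_range, card_biUnion (pairwiseDisjoint_Icc_maxAltSegs (x := x))] at this
  simpa only [segLenSum, Nat.card_Icc] using this.symm

theorem card_switchSet_add_numAltSegs : #(switchSet x) + numAltSegs (List.ofFn x) = n := by
  suffices #(switchSet x) + numAltSegs (List.ofFn x) = segLenSum (List.ofFn x) by
    rwa [segLenSum_ofFn] at this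
  rw [switchSet_eq_biUnion_Ico, card_biUnion ((pairwiseDisjoint_Icc_maxAltSegs (x := x)).mono_on
    fun _ _ => Ico_subset_Icc_self), numAltSegs, card_eq_sum_ones, ← sum_add_distrib, segLenSum]
  refine sum_congr rfl fun p hp => ?_
  have := ((mem_maxAltSegs_iff x).mp hp).1
  rw [Nat.card_Ico]
  omega

lemma numAltSegs_ofFn_le : numAltSegs (List.ofFn x) ≤ n := by
  have := card_switchSet_add_numAltSegs x
  omega

theorem two_mul_card_altPairs_add : 2 * #(altPairs x) + n = segLenSqSum (List.ofFn x) := by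
  suffices 2 * #(altPairs x) + segLenSum (List.ofFn x) = segLenSqSum (List.ofFn x) by
    rwa [segLenSum_ofFn] at this
  have hdisj : (maxAltSegs (List.ofFn x) : Set (ℕ × ℕ)).PairwiseDisjoint fun p =>
      (Icc p.1 p.2 ×ˢ Icc p.1 p.2).filter fun q => q.1 < q.2 :=
    fun _ hp _ hq hpq => disjoint_left.mpr fun _ hr hr' => hpq <|
      eq_of_mem_maxAltSegs_of_mem_Icc hp hq (mem_product.mp (mem_filter.mp hr).1).1
        (mem_product.mp (mem_filter.mp hr').1).1
  rw [altPairs_eq_biUnion, card_biUnion hdisj, mul_sum, segLenSum, ← sum_add_distrib, segLenSqSum]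
  refine sum_congr rfl fun p _ => ?_
  rw [card_product_filter_lt, Nat.card_Icc, Nat.choose_two_right,
    Nat.two_mul_div_two_of_even (Nat.even_mul_pred_self _)]
  cases p.2 + 1 - p.1 <;> simp [sq, mul_add]

/-- The FLL `1`-ball of a binary word with `A` maximal alternating segments of lengths `s_i` has
size `1 + n (n - A + 1) - Σ s_i (s_i - 1) / 2`, written here without subtraction or division. -/
theorem two_mul_card_fllBall_add :
    2 * #(fllBall 2 n 1 x) + segLenSqSum (List.ofFn x) + 2 * numAltSegs (List.ofFn x) * n =
      2 + 3 * n + 2 * n * n := by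
  have hball := card_fllBall_add_card_altPairs x
  have hpairs := two_mul_card_altPairs_add x
  have hS := card_switchSet_add_numAltSegs x
  have hSn : #(switchSet x) * n + numAltSegs (List.ofFn x) * n = n * n := by
    rw [← add_mul, hS]
  linarith

end Counting

section Profiles

/-- `(2t + 1) n - a t (t + 1)` is `Σ s_i²` for any `a` numbers `s_i ∈ {t, t + 1}` with sum `n`,
because `s² = (2t + 1) s - t (t + 1)` for such `s`. -/
def sqSumProfile (a n t : ℤ) : ℤ := (2 * t + 1) * n - a * t * (t + 1)

lemma sum_sq_eq_sqSumProfile {ι : Type*} (s : Finset ι) (f : ι → ℕ) (t : ℕ)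
    (h : ∀ i ∈ s, f i = t ∨ f i = t + 1) :
    ((∑ i ∈ s, f i ^ 2 : ℕ) : ℤ) = sqSumProfile #s (∑ i ∈ s, f i : ℕ) t := by
  have hterm : ∀ i ∈ s, ((f i ^ 2 : ℕ) : ℤ) = (2 * t + 1) * f i - t * (t + 1) := by
    intro i hi
    rcases h i hi with h | h <;> rw [h] <;> push_cast <;> ring
  rw [sqSumProfile, Nat.cast_sum, sum_congr rfl hterm, sum_sub_distrib, ← mul_sum, sum_const,
    nsmul_eq_mul]
  push_cast
  ring

lemma sqSumProfile_le {a n t : ℤ} (ha : 0 < a) (h1 : a * t < n) (h2 : n ≤ a * (t + 1)) (k : ℤ) :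
    sqSumProfile a n k ≤ sqSumProfile a n t := by
  have hdiff : sqSumProfile a n t - sqSumProfile a n k = (t - k) * (2 * n - a * (t + k + 1)) := by
    unfold sqSumProfile; ring
  rcases lt_trichotomy k t with hkt | rfl | hkt
  · nlinarith [mul_le_mul_of_nonneg_left (show k + 1 ≤ t by omega) ha.le]
  · exact le_rfl
  · nlinarith [mul_le_mul_of_nonneg_left (show t + 1 ≤ k by omega) ha.le]

/-- Each direction compares the maximal profile with a non-maximal one: the profile for `b`
parts at `t + 2`, resp. the profile for `b + 1` parts at `t' - 1`. -/
theorem sqSumProfile_add_two_mul_lt_iff {b n t t' : ℤ} (hb : 0 < b) (hn : 0 < n)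
    (ht : (b + 1) * t < n) (ht' : n ≤ (b + 1) * (t + 1))
    (hs : b * t' < n) (hs' : n ≤ b * (t' + 1)) :
    sqSumProfile (b + 1) n t + 2 * n < sqSumProfile b n t' ↔ 2 * b * (b + 1) < n := by
  constructor
  · intro h
    by_contra hle
    have ht'0 : 0 ≤ t' := by
      by_contra h0
      nlinarith
    have ht'b : t' ≤ 2 * b + 1 := by
      by_contra h0
      nlinarith
    have hprof := sqSumProfile_le (by omega) ht ht' (t' - 1)
    unfold sqSumProfile at h hprof
    nlinarith [mul_nonneg ht'0 (show 0 ≤ 2 * b + 1 - t' by omega)]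
  · intro h
    have htb : 2 * b ≤ t := by
      by_contra h0
      nlinarith
    have hprof := sqSumProfile_le hb hs hs' (t + 2)
    unfold sqSumProfile at hprof ⊢
    nlinarith [mul_nonneg (show 0 ≤ t + 3 by omega) (show 0 ≤ t - 2 * b by omega)]

lemma mul_pred_div_lt_and_le {a n : ℕ} (ha : 0 < a) (hn : 0 < n) :
    a * ((n - 1) / a) < n ∧ n ≤ a * ((n - 1) / a + 1) := by
  have h1 := Nat.div_mul_le_self (n - 1) a
  have h2 := Nat.lt_div_mul_add (a := n - 1) ha
  rw [mul_comm] at h1 h2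
  rw [mul_add, mul_one]
  omega

theorem segLenSqSum_of_isBalanced {n a : ℕ} {x : Fin n → Fin 2} (ha : 0 < a) (hn : 0 < n)
    (hx : IsBalanced n a x) :
    (segLenSqSum (List.ofFn x) : ℤ) = sqSumProfile a n ((n - 1) / a : ℕ) := by
  have hc : (n + a - 1) / a = (n - 1) / a + 1 := by
    rw [show n + a - 1 = n - 1 + a by omega, Nat.add_div_right _ ha]
  have h := sum_sq_eq_sqSumProfile (maxAltSegs (List.ofFn x)) (fun p => p.2 + 1 - p.1)
    ((n - 1) / a) fun p hp => by
      rcases hx.2 p hp with h | h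
      · exact Or.inr (h.trans hc)
      · exact Or.inl (by rw [h, hc, Nat.add_sub_cancel])
  rw [← segLenSum, segLenSum_ofFn, ← numAltSegs, hx.1] at h
  exact h

theorem two_mul_card_fllBall_of_isBalanced {n a : ℕ} {x : Fin n → Fin 2} (ha : 0 < a)
    (hx : IsBalanced n a x) :
    2 * (#(fllBall 2 n 1 x) : ℤ) =
      2 + 3 * n + 2 * n * n - 2 * a * n - sqSumProfile a n ((n - 1) / a : ℕ) := by
  have hn : a ≤ n := hx.1 ▸ numAltSegs_ofFn_le x
  have hball := two_mul_card_fllBall_add x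
  rw [hx.1] at hball
  rw [← segLenSqSum_of_isBalanced ha (by omega) hx]
  zify at hball
  linarith

end Profiles

end FLL

open FLL in
theorem balanced_ball_lt_iff_general (n a : ℕ) (ha2 : 2 ≤ a)
    (x y : Fin n → Fin 2) (hx : IsBalanced n a x) (hy : IsBalanced n (a - 1) y) :
    (fllBall 2 n 1 y).card < (fllBall 2 n 1 x).card ↔ 2 * (a - 1) * a < n := by
  obtain ⟨b, rfl⟩ : ∃ b, a = b + 1 := ⟨a - 1, by omega⟩
  rw [Nat.add_sub_cancel] at hy ⊢
  have hn : b + 1 ≤ n := hx.1 ▸ numAltSegs_ofFn_le x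
  have hballx := two_mul_card_fllBall_of_isBalanced (by omega) hx
  have hbally := two_mul_card_fllBall_of_isBalanced (by omega) hy
  obtain ⟨ht, ht'⟩ := mul_pred_div_lt_and_le (a := b + 1) (by omega) (show 0 < n by omega)
  obtain ⟨hs, hs'⟩ := mul_pred_div_lt_and_le (a := b) (by omega) (show 0 < n by omega)
  have key := sqSumProfile_add_two_mul_lt_iff (b := b) (n := n) (t := ((n - 1) / (b + 1) : ℕ))
    (t' := ((n - 1) / b : ℕ)) (by omega) (by omega)
    (by exact_mod_cast ht) (by exact_mod_cast ht') (by exact_mod_cast hs) (by exact_mod_cast hs')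
  push_cast at hballx hbally key
  zify
  rw [← key]
  constructor <;> intro h <;> linarith

/-- For `n > 1` and `2 ≤ a ≤ n`, an `a`-balanced sequence has a
strictly larger FLL `1`-ball than an `(a-1)`-balanced one iff `n > 2(a-1)a`. -/
theorem balanced_ball_lt_iff (n a : ℕ) (hn : 1 < n) (ha2 : 2 ≤ a) (han : a ≤ n)
    (x y : Fin n → Fin 2) (hx : IsBalanced n a x) (hy : IsBalanced n (a - 1) y) :
    (fllBall 2 n 1 y).card < (fllBall 2 n 1 x).card ↔ 2 * (a - 1) * a < n :=
  balanced_ball_lt_iff_general n a ha2 x y hx hy
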